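/- arXiv:2410.06984 — 8 statements merged into one kernel-verified Lean document; each statement's English description precedes it below -/
import Mathlib

section
/- Let θ₁, θ₂ ∈ ℝ and let x₁, x₂, x₃ : ℝ → ℝ satisfy x₁'(t) = θ₁·x₂(t), x₂'(t) = −θ₁·x₁(t), and x₃'(t) = θ₁·θ₂ for all t ∈ ℝ, and define the output y(t) = x₁(t) + x₃(t). Then y is four times differentiable and for all t, the second iterated derivative of y satisfies y''(t) = −θ₁²·x₁(t), and the fourth iterated derivative satisfies y⁽⁴⁾(t) = −θ₁²·y''(t). -/
/-!
Differentiating the output twice kills the drift `x₃`, whose derivative is constant, and leaves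
`x₁'' = θ₁ x₂' = -θ₁² x₁`. Since `x₁` itself solves `x₁'' = -θ₁² x₁`, differentiating
`y'' = -θ₁² x₁` twice more gives `y⁽⁴⁾ = -θ₁² x₁'' = -θ₁² y''`.
-/

section

variable {𝕜 : Type*} [NontriviallyNormedField 𝕜]

theorem deriv_deriv_add_of_hasDerivAt_const {F : Type*} [NormedAddCommGroup F]
    [NormedSpace 𝕜 F] {f g : 𝕜 → F} {c : F} (hf : Differentiable 𝕜 f)
    (hg : ∀ t, HasDerivAt g c t) :
    deriv (deriv (f + g)) = deriv (deriv f) := by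
  rw [deriv_eq fun t => (hf t).hasDerivAt.add (hg t), deriv_add_const']

theorem deriv_deriv_eq_neg_sq_mul_of_rotation {ω : 𝕜} {u v : 𝕜 → 𝕜}
    (hu : ∀ t, HasDerivAt u (ω * v t) t) (hv : ∀ t, HasDerivAt v (-ω * u t) t) :
    deriv (deriv u) = fun t => -ω ^ 2 * u t := by
  rw [deriv_eq hu, deriv_const_mul_field', deriv_eq hv]
  funext t
  ring

end

/-- For model M_{3.4} with output y = x₁ + x₃: y is four times differentiable,
y''(t) = −θ₁²·x₁(t), and y⁽⁴⁾(t) = −θ₁²·y''(t). -/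
theorem stmt_5 (θ₁ θ₂ : ℝ) (x₁ x₂ x₃ : ℝ → ℝ)
    (h₁ : ∀ t : ℝ, HasDerivAt x₁ (θ₁ * x₂ t) t)
    (h₂ : ∀ t : ℝ, HasDerivAt x₂ (-θ₁ * x₁ t) t)
    (h₃ : ∀ t : ℝ, HasDerivAt x₃ (θ₁ * θ₂) t)
    (y : ℝ → ℝ) (hy : ∀ t : ℝ, y t = x₁ t + x₃ t) :
    (Differentiable ℝ y ∧ Differentiable ℝ (deriv y) ∧
      Differentiable ℝ (deriv (deriv y)) ∧
      Differentiable ℝ (deriv (deriv (deriv y)))) ∧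
    (∀ t : ℝ, iteratedDeriv 2 y t = -θ₁ ^ 2 * x₁ t) ∧
    (∀ t : ℝ, iteratedDeriv 4 y t = -θ₁ ^ 2 * iteratedDeriv 2 y t) := by
  have hy : y = x₁ + x₃ := funext hy
  have hx₁ : Differentiable ℝ x₁ := fun t => (h₁ t).differentiableAt
  have hx₂ : Differentiable ℝ x₂ := fun t => (h₂ t).differentiableAt
  have hx₁'' := deriv_deriv_eq_neg_sq_mul_of_rotation h₁ h₂
  have hy' : deriv y = fun t => θ₁ * x₂ t + θ₁ * θ₂ :=
    hy ▸ deriv_eq fun t => (h₁ t).add (h₃ t)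
  have hy'' : deriv (deriv y) = fun t => -θ₁ ^ 2 * x₁ t := by
    rw [hy, deriv_deriv_add_of_hasDerivAt_const hx₁ h₃, hx₁'']
  have hy''' : deriv (deriv (deriv y)) = fun t => -θ₁ ^ 2 * (θ₁ * x₂ t) := by
    rw [hy'', deriv_const_mul_field', deriv_eq h₁]
  refine ⟨⟨?_, ?_, ?_, ?_⟩, fun t => by rw [iteratedDeriv_succ, iteratedDeriv_one, hy''],
    fun t => ?_⟩
  · exact hy ▸ hx₁.add fun t => (h₃ t).differentiableAt
  · exact hy' ▸ (hx₂.const_mul θ₁).add_const _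
  · exact hy'' ▸ hx₁.const_mul _
  · exact hy''' ▸ (hx₂.const_mul θ₁).const_mul _
  · simp only [iteratedDeriv_succ, iteratedDeriv_zero, hy'', deriv_const_mul_field', hx₁'']
end

section
/- Let θ₁, θ₂ ∈ ℝ and let x₁, x₂, x₃ : ℝ → ℝ satisfy x₁'(t) = θ₁·x₂(t), x₂'(t) = −θ₁·x₁(t), and x₃'(t) = θ₁·θ₂ for all t ∈ ℝ, and define the output y(t) = x₁(t) + x₃(t). If t₀ ∈ ℝ is such that the second iterated derivative y''(t₀) ≠ 0, then θ₁² = −y⁽⁴⁾(t₀)/y''(t₀), where y⁽⁴⁾ denotes the fourth iterated derivative of y; in particular θ₁ equals √(−y⁽⁴⁾(t₀)/y''(t₀)) or −√(−y⁽⁴⁾(t₀)/y''(t₀)). -/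
/-- For model M_{3.4}: if y''(t₀) ≠ 0 then θ₁² = −y⁽⁴⁾(t₀)/y''(t₀); in
particular θ₁ = ±√(−y⁽⁴⁾(t₀)/y''(t₀)). -/
theorem stmt_6 (θ₁ θ₂ : ℝ) (x₁ x₂ x₃ : ℝ → ℝ)
    (h₁ : ∀ t : ℝ, HasDerivAt x₁ (θ₁ * x₂ t) t)
    (h₂ : ∀ t : ℝ, HasDerivAt x₂ (-θ₁ * x₁ t) t)
    (h₃ : ∀ t : ℝ, HasDerivAt x₃ (θ₁ * θ₂) t)
    (y : ℝ → ℝ) (hy : ∀ t : ℝ, y t = x₁ t + x₃ t)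
    (t₀ : ℝ) (ht₀ : iteratedDeriv 2 y t₀ ≠ 0) :
    θ₁ ^ 2 = -(iteratedDeriv 4 y t₀) / iteratedDeriv 2 y t₀ ∧
    (θ₁ = Real.sqrt (-(iteratedDeriv 4 y t₀) / iteratedDeriv 2 y t₀) ∨
      θ₁ = -Real.sqrt (-(iteratedDeriv 4 y t₀) / iteratedDeriv 2 y t₀)) := by
  have hyf : y = fun t => x₁ t + x₃ t := funext hy
  have hd1 : deriv y = fun t => θ₁ * x₂ t + θ₁ * θ₂ := by
    funext t
    rw [hyf]; exact ((h₁ t).add (h₃ t)).deriv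
  have hd2 : deriv (deriv y) = fun t => -(θ₁ ^ 2) * x₁ t := by
    funext t
    have : HasDerivAt (fun t => θ₁ * x₂ t + θ₁ * θ₂) (-(θ₁ ^ 2) * x₁ t) t := by
      have : HasDerivAt (fun t => θ₁ * x₂ t + θ₁ * θ₂) (θ₁ * (-θ₁ * x₁ t)) t :=
        (((h₂ t).const_mul θ₁).add_const (θ₁ * θ₂))
      convert this using 1
      ring
    rw [hd1]
    exact this.deriv
  have hd3 : deriv (deriv (deriv y)) = fun t => -(θ₁ ^ 2) * (θ₁ * x₂ t) := by
    funext t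
    rw [hd2]
    exact (((h₁ t).const_mul (-(θ₁ ^ 2)))).deriv
  have hd4 : deriv (deriv (deriv (deriv y))) = fun t => -(θ₁ ^ 2) * (θ₁ * (-θ₁ * x₁ t)) := by
    funext t
    rw [hd3]
    exact (((h₂ t).const_mul θ₁).const_mul (-(θ₁ ^ 2))).deriv
  have e2 : iteratedDeriv 2 y t₀ = -(θ₁ ^ 2) * x₁ t₀ := by
    rw [show (2:ℕ) = 0+1+1 by rfl, iteratedDeriv_succ, iteratedDeriv_succ, iteratedDeriv_zero,
      hd2]
  have e4 : iteratedDeriv 4 y t₀ = θ₁ ^ 4 * x₁ t₀ := by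
    rw [show (4:ℕ) = 0+1+1+1+1 by rfl, iteratedDeriv_succ, iteratedDeriv_succ,
      iteratedDeriv_succ, iteratedDeriv_succ, iteratedDeriv_zero, hd4]
    ring
  have key : θ₁ ^ 2 = -(iteratedDeriv 4 y t₀) / iteratedDeriv 2 y t₀ := by
    have hx : x₁ t₀ ≠ 0 := by
      rw [e2] at ht₀; intro h; apply ht₀; rw [h]; ring
    have hθ : θ₁ ≠ 0 := by
      rw [e2] at ht₀; intro h; apply ht₀; rw [h]; ring
    rw [e2, e4]
    field_simp
  refine ⟨key, ?_⟩
  rw [← key]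
  rcases le_or_gt 0 θ₁ with h | h
  · left; rw [Real.sqrt_sq h]
  · right; rw [show θ₁ ^ 2 = (-θ₁) ^ 2 by ring, Real.sqrt_sq (by linarith)]; ring
end

section
/- Let θ₁, θ₂, θ₁', θ₂' ∈ ℝ, let (x₁, x₂, x₃) : ℝ → ℝ³ satisfy x₁' = θ₁·x₂, x₂' = −θ₁·x₁, x₃' = θ₁·θ₂, and let (x₁', x₂', x₃') : ℝ → ℝ³ satisfy the same equations with parameters (θ₁', θ₂'). Suppose the outputs coincide: x₁(t) + x₃(t) = x₁'(t) + x₃'(t) for all t ∈ ℝ, and suppose there exists t₀ with the second iterated derivative of the output nonzero at t₀. Then θ₁² = θ₁'², i.e. the parameter θ₁ of model M_{3.4} is determined by the output up to sign. -/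
lemma stmt_7_aux (c d : ℝ) (x₁ x₂ x₃ : ℝ → ℝ)
    (h₁ : ∀ t : ℝ, HasDerivAt x₁ (c * x₂ t) t)
    (h₂ : ∀ t : ℝ, HasDerivAt x₂ (-c * x₁ t) t)
    (h₃ : ∀ t : ℝ, HasDerivAt x₃ d t) :
    (∀ t : ℝ, iteratedDeriv 2 (fun t => x₁ t + x₃ t) t = -(c^2) * x₁ t) ∧
    (∀ t : ℝ, iteratedDeriv 4 (fun t => x₁ t + x₃ t) t = c^4 * x₁ t) := by
  have D1 : deriv (fun t => x₁ t + x₃ t) = fun t => c * x₂ t + d :=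
    funext fun t => ((h₁ t).add (h₃ t)).deriv
  have D2 : deriv (fun t => c * x₂ t + d) = fun t => -(c^2) * x₁ t := by
    funext t
    have h : HasDerivAt (fun t => c * x₂ t + d) (-(c^2) * x₁ t) t := by
      have := ((h₂ t).const_mul c).add_const d
      exact this.congr_deriv (by ring)
    exact h.deriv
  have D3 : deriv (fun t => -(c^2) * x₁ t) = fun t => -(c^2) * (c * x₂ t) := by
    funext t
    exact ((h₁ t).const_mul (-(c^2))).deriv
  have D4 : deriv (fun t => -(c^2) * (c * x₂ t)) = fun t => c^4 * x₁ t := by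
    funext t
    have h : HasDerivAt (fun t => -(c^2) * (c * x₂ t)) (c^4 * x₁ t) t := by
      have := ((h₂ t).const_mul c).const_mul (-(c^2))
      exact this.congr_deriv (by ring)
    exact h.deriv
  have e2 : iteratedDeriv 2 (fun t => x₁ t + x₃ t) = fun t => -(c^2) * x₁ t := by
    rw [iteratedDeriv_succ, iteratedDeriv_one, D1, D2]
  have e4 : iteratedDeriv 4 (fun t => x₁ t + x₃ t) = fun t => c^4 * x₁ t := by
    rw [show (4:ℕ) = 2 + 1 + 1 by rfl, iteratedDeriv_succ, iteratedDeriv_succ, e2, D3, D4]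
  exact ⟨fun t => by rw [e2], fun t => by rw [e4]⟩

/-- For model M_{3.4}: if two parameterisations produce the same output,
whose second derivative is nonzero somewhere, then θ₁² = θ₁'². -/
theorem stmt_7 (θ₁ θ₂ θ₁' θ₂' : ℝ) (a₁ a₂ a₃ b₁ b₂ b₃ : ℝ → ℝ)
    (ha₁ : ∀ t : ℝ, HasDerivAt a₁ (θ₁ * a₂ t) t)
    (ha₂ : ∀ t : ℝ, HasDerivAt a₂ (-θ₁ * a₁ t) t)
    (ha₃ : ∀ t : ℝ, HasDerivAt a₃ (θ₁ * θ₂) t)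
    (hb₁ : ∀ t : ℝ, HasDerivAt b₁ (θ₁' * b₂ t) t)
    (hb₂ : ∀ t : ℝ, HasDerivAt b₂ (-θ₁' * b₁ t) t)
    (hb₃ : ∀ t : ℝ, HasDerivAt b₃ (θ₁' * θ₂') t)
    (hout : ∀ t : ℝ, a₁ t + a₃ t = b₁ t + b₃ t)
    (t₀ : ℝ) (ht₀ : iteratedDeriv 2 (fun t => a₁ t + a₃ t) t₀ ≠ 0) :
    θ₁ ^ 2 = θ₁' ^ 2 := by
  obtain ⟨ea2, ea4⟩ := stmt_7_aux θ₁ (θ₁ * θ₂) a₁ a₂ a₃ ha₁ ha₂ ha₃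
  obtain ⟨eb2, eb4⟩ := stmt_7_aux θ₁' (θ₁' * θ₂') b₁ b₂ b₃ hb₁ hb₂ hb₃
  have hfun : (fun t => a₁ t + a₃ t) = (fun t => b₁ t + b₃ t) := funext hout
  have h2 : -(θ₁^2) * a₁ t₀ = -(θ₁'^2) * b₁ t₀ := by
    rw [← ea2, hfun, eb2]
  have h4 : θ₁^4 * a₁ t₀ = θ₁'^4 * b₁ t₀ := by
    rw [← ea4, hfun, eb4]
  have hne : -(θ₁^2) * a₁ t₀ ≠ 0 := by rw [← ea2]; exact ht₀
  have key : (θ₁^2 * a₁ t₀) * (θ₁^2 - θ₁'^2) = 0 := by linear_combination h4 + θ₁'^2 * h2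
  rcases mul_eq_zero.mp key with h | h
  · exact absurd (by linear_combination -h) hne
  · linarith
end

section
/- Let θ₁, θ₂ ∈ ℝ with θ₁ ≠ 0 and let x₁, x₂, x₃ : ℝ → ℝ satisfy x₁'(t) = θ₁·x₂(t), x₂'(t) = −θ₁·x₁(t), and x₃'(t) = θ₁·θ₂ for all t ∈ ℝ, and define the output y(t) = x₁(t) + x₃(t). Then for all t ∈ ℝ, θ₁·θ₂ = y'(t) + y'''(t)/θ₁², where y' and y''' denote the first and third iterated derivatives of y. -/
/-- For model M_{3.4} with θ₁ ≠ 0: θ₁·θ₂ = y'(t) + y'''(t)/θ₁² for all t. -/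
theorem stmt_8 (θ₁ θ₂ : ℝ) (hθ₁ : θ₁ ≠ 0) (x₁ x₂ x₃ : ℝ → ℝ)
    (h₁ : ∀ t : ℝ, HasDerivAt x₁ (θ₁ * x₂ t) t)
    (h₂ : ∀ t : ℝ, HasDerivAt x₂ (-θ₁ * x₁ t) t)
    (h₃ : ∀ t : ℝ, HasDerivAt x₃ (θ₁ * θ₂) t)
    (y : ℝ → ℝ) (hy : ∀ t : ℝ, y t = x₁ t + x₃ t) :
    ∀ t : ℝ, θ₁ * θ₂ = deriv y t + iteratedDeriv 3 y t / θ₁ ^ 2 := by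
  have hyf : y = fun t => x₁ t + x₃ t := funext hy
  have hdy : deriv y = fun t => θ₁ * x₂ t + θ₁ * θ₂ := by
    funext t
    have : HasDerivAt y (θ₁ * x₂ t + θ₁ * θ₂) t := by
      rw [hyf]; exact (h₁ t).add (h₃ t)
    exact this.deriv
  have hd2 : deriv (deriv y) = fun t => -θ₁ ^ 2 * x₁ t := by
    funext t
    have : HasDerivAt (deriv y) (-θ₁ ^ 2 * x₁ t) t := by
      rw [hdy]
      have := ((h₂ t).const_mul θ₁).add_const (θ₁ * θ₂)
      rw [show -θ₁ ^ 2 * x₁ t = θ₁ * (-θ₁ * x₁ t) by ring]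
      exact this
    exact this.deriv
  have hd3 : ∀ t, deriv (deriv (deriv y)) t = -θ₁ ^ 2 * (θ₁ * x₂ t) := by
    intro t
    have : HasDerivAt (deriv (deriv y)) (-θ₁ ^ 2 * (θ₁ * x₂ t)) t := by
      rw [hd2]
      exact (h₁ t).const_mul (-θ₁ ^ 2)
    exact this.deriv
  intro t
  have h3 : iteratedDeriv 3 y t = -θ₁ ^ 2 * (θ₁ * x₂ t) := by
    rw [show (3 : ℕ) = 2 + 1 from rfl, iteratedDeriv_succ, iteratedDeriv_succ,
      iteratedDeriv_one]
    exact hd3 t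
  rw [h3, hdy]
  field_simp
  ring
end

section
/- Let θ₁, θ₂, θ₁', θ₂' ∈ ℝ, let (x₁, x₂, x₃) : ℝ → ℝ³ satisfy x₁' = θ₁·x₂, x₂' = −θ₁·x₁, x₃' = θ₁·θ₂, and let (x₁', x₂', x₃') : ℝ → ℝ³ satisfy the same equations with parameters (θ₁', θ₂'). Suppose the outputs coincide: x₁(t) + x₃(t) = x₁'(t) + x₃'(t) for all t ∈ ℝ, and there exists t₀ with the second iterated derivative of the output nonzero at t₀. Then θ₁·θ₂ = θ₁'·θ₂', i.e. the product θ₁θ₂ of model M_{3.4} is identifiable from the output. -/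
/-- For model M_{3.4}: if two parameterisations produce the same output,
whose second derivative is nonzero somewhere, then θ₁θ₂ = θ₁'θ₂'. -/
theorem stmt_9 (θ₁ θ₂ θ₁' θ₂' : ℝ) (a₁ a₂ a₃ b₁ b₂ b₃ : ℝ → ℝ)
    (ha₁ : ∀ t : ℝ, HasDerivAt a₁ (θ₁ * a₂ t) t)
    (ha₂ : ∀ t : ℝ, HasDerivAt a₂ (-θ₁ * a₁ t) t)
    (ha₃ : ∀ t : ℝ, HasDerivAt a₃ (θ₁ * θ₂) t)
    (hb₁ : ∀ t : ℝ, HasDerivAt b₁ (θ₁' * b₂ t) t)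
    (hb₂ : ∀ t : ℝ, HasDerivAt b₂ (-θ₁' * b₁ t) t)
    (hb₃ : ∀ t : ℝ, HasDerivAt b₃ (θ₁' * θ₂') t)
    (hout : ∀ t : ℝ, a₁ t + a₃ t = b₁ t + b₃ t)
    (t₀ : ℝ) (ht₀ : iteratedDeriv 2 (fun t => a₁ t + a₃ t) t₀ ≠ 0) :
    θ₁ * θ₂ = θ₁' * θ₂' := by
  have h1 : ∀ t : ℝ, θ₁ * a₂ t + θ₁ * θ₂ = θ₁' * b₂ t + θ₁' * θ₂' := by
    intro t
    have hA : HasDerivAt (fun t => a₁ t + a₃ t) (θ₁ * a₂ t + θ₁ * θ₂) t :=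
      (ha₁ t).add (ha₃ t)
    have hB : HasDerivAt (fun t => a₁ t + a₃ t) (θ₁' * b₂ t + θ₁' * θ₂') t := by
      have heq : (fun t => a₁ t + a₃ t) = fun t => b₁ t + b₃ t := funext hout
      rw [heq]; exact (hb₁ t).add (hb₃ t)
    exact hA.unique hB
  have h2 : ∀ t : ℝ, -θ₁^2 * a₁ t = -θ₁'^2 * b₁ t := by
    intro t
    have hA : HasDerivAt (fun t => θ₁ * a₂ t + θ₁ * θ₂) (-θ₁^2 * a₁ t) t := by
      have := ((ha₂ t).const_mul θ₁).add_const (θ₁ * θ₂)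
      exact this.congr_deriv (by ring)
    have hB : HasDerivAt (fun t => θ₁ * a₂ t + θ₁ * θ₂) (-θ₁'^2 * b₁ t) t := by
      have heq : (fun t => θ₁ * a₂ t + θ₁ * θ₂) = fun t => θ₁' * b₂ t + θ₁' * θ₂' :=
        funext h1
      rw [heq]
      have := ((hb₂ t).const_mul θ₁').add_const (θ₁' * θ₂')
      exact this.congr_deriv (by ring)
    exact hA.unique hB
  have h3 : ∀ t : ℝ, -θ₁^3 * a₂ t = -θ₁'^3 * b₂ t := by
    intro t
    have hA : HasDerivAt (fun t => -θ₁^2 * a₁ t) (-θ₁^3 * a₂ t) t := by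
      have := (ha₁ t).const_mul (-θ₁^2)
      exact this.congr_deriv (by ring)
    have hB : HasDerivAt (fun t => -θ₁^2 * a₁ t) (-θ₁'^3 * b₂ t) t := by
      have heq : (fun t => -θ₁^2 * a₁ t) = fun t => -θ₁'^2 * b₁ t := funext h2
      rw [heq]
      have := (hb₁ t).const_mul (-θ₁'^2)
      exact this.congr_deriv (by ring)
    exact hA.unique hB
  have h4 : ∀ t : ℝ, θ₁^4 * a₁ t = θ₁'^4 * b₁ t := by
    intro t
    have hA : HasDerivAt (fun t => -θ₁^3 * a₂ t) (θ₁^4 * a₁ t) t := by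
      have := (ha₂ t).const_mul (-θ₁^3)
      exact this.congr_deriv (by ring)
    have hB : HasDerivAt (fun t => -θ₁^3 * a₂ t) (θ₁'^4 * b₁ t) t := by
      have heq : (fun t => -θ₁^3 * a₂ t) = fun t => -θ₁'^3 * b₂ t := funext h3
      rw [heq]
      have := (hb₂ t).const_mul (-θ₁'^3)
      exact this.congr_deriv (by ring)
    exact hA.unique hB
  have hd1 : deriv (fun t => a₁ t + a₃ t) = fun t => θ₁ * a₂ t + θ₁ * θ₂ := by
    funext t; exact ((ha₁ t).add (ha₃ t)).deriv
  have hd2 : iteratedDeriv 2 (fun t => a₁ t + a₃ t) t₀ = -θ₁^2 * a₁ t₀ := by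
    rw [iteratedDeriv_succ, iteratedDeriv_one, hd1]
    have hA : HasDerivAt (fun t => θ₁ * a₂ t + θ₁ * θ₂) (-θ₁^2 * a₁ t₀) t₀ := by
      have := ((ha₂ t₀).const_mul θ₁).add_const (θ₁ * θ₂)
      exact this.congr_deriv (by ring)
    exact hA.deriv
  rw [hd2] at ht₀
  have e1 := h1 t₀
  have e2 := h2 t₀
  have e3 := h3 t₀
  have e4 := h4 t₀
  have hne : θ₁^2 * a₁ t₀ ≠ 0 := by
    intro h; apply ht₀; linarith
  have hθ1 : θ₁^2 ≠ 0 := by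
    intro h; apply hne; rw [h]; ring
  have hθsq : θ₁^2 = θ₁'^2 := by
    have key : θ₁^2 * (θ₁^2 * a₁ t₀) = θ₁'^2 * (θ₁^2 * a₁ t₀) := by nlinarith
    exact mul_right_cancel₀ hne key
  have hmid : θ₁ * a₂ t₀ = θ₁' * b₂ t₀ := by
    have key : θ₁^2 * (θ₁ * a₂ t₀) = θ₁^2 * (θ₁' * b₂ t₀) := by
      linear_combination -e3 - (θ₁' * b₂ t₀) * hθsq
    exact mul_left_cancel₀ hθ1 key
  linarith
end

section
/- Let p₁, p₂, p₃ ∈ ℝ and let x₁, x₂, x₃ : ℝ → ℝ be differentiable and satisfy x₁'(t) = −x₁(t)·x₂(t) + p₂·(10 − x₂(t)), x₂'(t) = −x₁(t)·x₂(t) + (p₂ + p₃)·(10 − x₂(t)), and x₃'(t) = −p₁·x₃(t) + p₃·(10 − x₂(t)) for all t ∈ ℝ, with initial conditions x₁(0) = 0 and x₂(0) = 10. Then for all t ∈ ℝ: x₁(t) = 0, x₂(t) = 10, and x₃(t) = x₃(0)·exp(−p₁·t). -/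
open Set

/-- Gronwall-style vanishing lemma: if `|g'| ≤ K_T·|g|` on each symmetric interval
and `g 0 = 0`, then `g ≡ 0`. -/
lemma gron_zero (g D : ℝ → ℝ) (hg : ∀ t, HasDerivAt g (D t) t) (h0 : g 0 = 0)
    (hb : ∀ T : ℝ, 0 < T → ∃ K : ℝ, ∀ t ∈ Icc (-T) T, |D t| ≤ K * |g t|) :
    ∀ t, g t = 0 := by
  intro t
  obtain ⟨K, hK⟩ := hb (|t| + 1) (by positivity)
  rcases le_total 0 t with ht | ht
  · have := norm_le_gronwallBound_of_norm_deriv_right_le (f := g) (f' := D)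
      (δ := 0) (K := K) (ε := 0) (a := 0) (b := |t| + 1)
      (fun s _ => (hg s).continuousAt.continuousWithinAt)
      (fun s _ => (hg s).hasDerivWithinAt)
      (by simp [h0])
      (fun s hs => by
        have h1 := hs.1; have h2 := hs.2
        have := hK s ⟨by linarith [abs_nonneg t], le_of_lt h2⟩
        simpa using this)
      t ⟨ht, by rw [abs_of_nonneg ht] at *; linarith⟩
    rw [gronwallBound_ε0_δ0] at this
    have h2 : |g t| ≤ 0 := by simpa using this
    exact abs_eq_zero.mp (le_antisymm h2 (abs_nonneg _))
  · have hgn : ∀ s, HasDerivAt (fun u => g (-u)) (-D (-s)) s := fun s => by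
      have h := (hg (-s)).comp s (hasDerivAt_neg s)
      simp at h
      exact h
    have := norm_le_gronwallBound_of_norm_deriv_right_le
      (f := fun u => g (-u)) (f' := fun u => -D (-u))
      (δ := 0) (K := K) (ε := 0) (a := 0) (b := |t| + 1)
      (fun s _ => (hgn s).continuousAt.continuousWithinAt)
      (fun s _ => (hgn s).hasDerivWithinAt)
      (by simp [h0])
      (fun s hs => by
        have h1 := hs.1; have h2 := hs.2
        have := hK (-s) ⟨by linarith, by linarith [abs_nonneg t]⟩
        simpa [abs_neg] using this)
      (-t) ⟨by linarith, by rw [abs_of_nonpos ht]; linarith⟩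
    rw [gronwallBound_ε0_δ0] at this
    have : |g t| ≤ 0 := by simpa using this
    exact abs_eq_zero.mp (le_antisymm this (abs_nonneg _))

set_option maxHeartbeats 1200000 in
/-- Model M_{3.3.A} from the initial condition x₁(0) = 0, x₂(0) = 10:
x₁ ≡ 0, x₂ ≡ 10, and x₃(t) = x₃(0)·exp(−p₁t). -/
theorem stmt_13 (p₁ p₂ p₃ : ℝ) (x₁ x₂ x₃ : ℝ → ℝ)
    (h₁ : ∀ t : ℝ, HasDerivAt x₁ (-(x₁ t) * x₂ t + p₂ * (10 - x₂ t)) t)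
    (h₂ : ∀ t : ℝ, HasDerivAt x₂ (-(x₁ t) * x₂ t + (p₂ + p₃) * (10 - x₂ t)) t)
    (h₃ : ∀ t : ℝ, HasDerivAt x₃ (-p₁ * x₃ t + p₃ * (10 - x₂ t)) t)
    (hx₁0 : x₁ 0 = 0) (hx₂0 : x₂ 0 = 10) :
    ∀ t : ℝ, x₁ t = 0 ∧ x₂ t = 10 ∧ x₃ t = x₃ 0 * Real.exp (-p₁ * t) := by
  set g : ℝ → ℝ := fun t => (x₁ t) ^ 2 + (x₂ t - 10) ^ 2 with hgdef
  set D : ℝ → ℝ := fun t =>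
    2 * x₁ t * (-(x₁ t) * x₂ t + p₂ * (10 - x₂ t)) +
      2 * (x₂ t - 10) * (-(x₁ t) * x₂ t + (p₂ + p₃) * (10 - x₂ t)) with hDdef
  have hg : ∀ t, HasDerivAt g (D t) t := fun t => by
    have h := (((h₁ t).pow 2).add (((h₂ t).sub_const 10).pow 2))
    refine h.congr_deriv ?_
    simp only [hDdef]; ring
  have hcont1 : Continuous x₁ := continuous_iff_continuousAt.mpr fun t => (h₁ t).continuousAt
  have hcont2 : Continuous x₂ := continuous_iff_continuousAt.mpr fun t => (h₂ t).continuousAt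
  have hgz : ∀ t, g t = 0 := by
    apply gron_zero g D hg (by simp [hgdef, hx₁0, hx₂0])
    intro T hT
    obtain ⟨M, hM⟩ := (isCompact_Icc (a := -T) (b := T)).exists_bound_of_continuousOn
      (f := fun t => (x₁ t, x₂ t - 10)) ((hcont1.prodMk (hcont2.sub continuous_const)).continuousOn)
    refine ⟨2 * M + 30 + 2 * |p₂| + 2 * |p₂ + p₃|, fun t ht => ?_⟩
    have hMt := hM t ht
    have ha : |x₁ t| ≤ M := by
      calc |x₁ t| = ‖(x₁ t, x₂ t - 10).1‖ := (Real.norm_eq_abs _).symm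
        _ ≤ ‖(x₁ t, x₂ t - 10)‖ := norm_fst_le _
        _ ≤ M := hMt
    have hb : |x₂ t - 10| ≤ M := by
      calc |x₂ t - 10| = ‖(x₁ t, x₂ t - 10).2‖ := (Real.norm_eq_abs _).symm
        _ ≤ ‖(x₁ t, x₂ t - 10)‖ := norm_snd_le _
        _ ≤ M := hMt
    set a := x₁ t with hadef
    set b := x₂ t - 10 with hbdef
    have hx2 : x₂ t = b + 10 := by rw [hbdef]; ring
    have hga : g t = a ^ 2 + b ^ 2 := rfl
    have hDa : D t = 2 * a * (-a * (b + 10) + p₂ * (-b)) +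
        2 * b * (-a * (b + 10) + (p₂ + p₃) * (-b)) := by
      simp only [hDdef, ← hadef, hx2]; ring_nf
    rw [hga, hDa, abs_of_nonneg (by positivity : (0:ℝ) ≤ a ^ 2 + b ^ 2)]
    have ha' := abs_le.mp ha
    have hb' := abs_le.mp hb
    have hp2 := abs_nonneg p₂
    have hp23 := abs_nonneg (p₂ + p₃)
    have hp2' := le_abs_self p₂
    have hp2'' := neg_abs_le p₂
    have hp23' := le_abs_self (p₂ + p₃)
    have hp23'' := neg_abs_le (p₂ + p₃)
    have hM0 : 0 ≤ M := le_trans (abs_nonneg a) ha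
    rw [abs_le]
    constructor <;> nlinarith [sq_nonneg (a + b), sq_nonneg (a - b), sq_nonneg a, sq_nonneg b,
      mul_nonneg hM0 (sq_nonneg a), mul_nonneg hM0 (sq_nonneg b),
      mul_le_mul_of_nonneg_left ha'.2 hM0, sq_nonneg (a*b),
      mul_nonneg hp2 (sq_nonneg (a+b)), mul_nonneg hp2 (sq_nonneg (a-b)),
      mul_nonneg hp23 (sq_nonneg b), mul_nonneg hp23 (sq_nonneg a)]
  have hgz' : ∀ t, x₁ t ^ 2 + (x₂ t - 10) ^ 2 = 0 := hgz
  have hx1 : ∀ t, x₁ t = 0 := fun t => by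
    nlinarith [hgz' t, sq_nonneg (x₁ t), sq_nonneg (x₂ t - 10)]
  have hx2 : ∀ t, x₂ t = 10 := fun t => by
    nlinarith [hgz' t, sq_nonneg (x₁ t), sq_nonneg (x₂ t - 10)]
  -- x₃ part
  have hh : ∀ t, HasDerivAt (fun t => x₃ t * Real.exp (p₁ * t)) 0 t := fun t => by
    have h := (h₃ t).mul ((Real.hasDerivAt_exp (p₁ * t)).comp t
      ((hasDerivAt_id t).const_mul p₁))
    refine h.congr_deriv ?_
    rw [hx2 t]; simp only [Function.comp_apply]; ring
  have hconst : ∀ t, x₃ t * Real.exp (p₁ * t) = x₃ 0 := by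
    have := is_const_of_deriv_eq_zero (𝕜 := ℝ) (f := fun t => x₃ t * Real.exp (p₁ * t))
      (fun t => (hh t).differentiableAt) (fun t => (hh t).deriv)
    intro t
    simpa using this t 0
  intro t
  refine ⟨hx1 t, hx2 t, ?_⟩
  rw [← hconst t, neg_mul, Real.exp_neg, mul_assoc,
    mul_inv_cancel₀ (Real.exp_ne_zero _), mul_one]
end

section
/- Let p₁ ∈ ℝ, let (p₂, p₃) and (p₂', p₃') be two pairs of real parameters, and let (x₁, x₂, x₃) and (x₁', x₂', x₃') be differentiable solutions on ℝ of the system x₁' = −x₁x₂ + p₂(10 − x₂), x₂' = −x₁x₂ + (p₂ + p₃)(10 − x₂), x₃' = −p₁x₃ + p₃(10 − x₂) with parameters (p₁, p₂, p₃) and (p₁, p₂', p₃') respectively, both with initial conditions x₁(0) = x₁'(0) = 0, x₂(0) = x₂'(0) = 10, and x₃(0) = x₃'(0). Then the outputs coincide: x₁(t) = x₁'(t) and x₃(t) = x₃'(t) for all t ∈ ℝ. (Hence the parameters p₂ and p₃ of model M_{3.3.A} are unidentifiable from the initial condition x₁(0) = 0, x₂(0) = 10.) -/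
open Set Real


lemma aux_cross (p v w : ℝ) : 2*p*(v*w) ≤ |p| * v^2 + |p| * w^2 := by
  nlinarith [mul_nonneg (show (0:ℝ) ≤ |p| + p by linarith [neg_abs_le p]) (sq_nonneg (v - w)),
    mul_nonneg (show (0:ℝ) ≤ |p| - p by linarith [le_abs_self p]) (sq_nonneg (v + w))]

lemma aux_cross' (p v w : ℝ) : -(2*p*(v*w)) ≤ |p| * v^2 + |p| * w^2 := by
  have h := aux_cross (-p) v w
  rw [abs_neg] at h
  linarith

lemma aux_cube (C v w : ℝ) (h : -C ≤ w) : -(2*v^2*w) ≤ 2*C*v^2 := by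
  nlinarith [mul_nonneg (sq_nonneg v) (show (0:ℝ) ≤ w + C by linarith)]

lemma aux_sq (q w : ℝ) : 2*q*w^2 ≤ 2*|q| * w^2 := by
  have h := aux_cross q w w
  nlinarith [h]

set_option maxHeartbeats 1000000 in
lemma key_lemma (p₂ p₃ : ℝ) (x₁ x₂ : ℝ → ℝ)
    (hx₁ : ∀ t : ℝ, HasDerivAt x₁ (-(x₁ t) * x₂ t + p₂ * (10 - x₂ t)) t)
    (hx₂ : ∀ t : ℝ, HasDerivAt x₂ (-(x₁ t) * x₂ t + (p₂ + p₃) * (10 - x₂ t)) t)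
    (h1 : x₁ 0 = 0) (h2 : x₂ 0 = 10) :
    ∀ t : ℝ, x₁ t = 0 ∧ x₂ t = 10 := by
  intro T
  obtain ⟨a, ha⟩ : ∃ a : ℝ, a = -(|T| + 1) := ⟨_, rfl⟩
  obtain ⟨b, hb⟩ : ∃ b : ℝ, b = |T| + 1 := ⟨_, rfl⟩
  have habs : (0:ℝ) ≤ |T| := abs_nonneg T
  have ha0 : a < 0 := by rw [ha]; linarith
  have hb0 : (0:ℝ) < b := by rw [hb]; linarith
  obtain ⟨E, hEdef⟩ : ∃ E : ℝ → ℝ, E = fun t => (x₁ t) ^ 2 + (x₂ t - 10) ^ 2 := ⟨_, rfl⟩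
  obtain ⟨D, hDdef⟩ : ∃ D : ℝ → ℝ, D = fun t =>
    2 * x₁ t * (-(x₁ t) * x₂ t + p₂ * (10 - x₂ t)) +
      2 * (x₂ t - 10) * (-(x₁ t) * x₂ t + (p₂ + p₃) * (10 - x₂ t)) := ⟨_, rfl⟩
  have hE' : ∀ t, HasDerivAt E (D t) t := by
    intro t
    have h1' := ((hx₁ t).fun_pow 2)
    have h2' := (((hx₂ t).sub_const 10).fun_pow 2)
    have h3' := h1'.add h2'
    rw [hEdef, hDdef]
    refine h3'.congr_deriv ?_
    norm_num
  have hcx₁ : Continuous x₁ :=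
    continuous_iff_continuousAt.mpr fun t => (hx₁ t).differentiableAt.continuousAt
  have hcx₂ : Continuous x₂ :=
    continuous_iff_continuousAt.mpr fun t => (hx₂ t).differentiableAt.continuousAt
  have hEcont : Continuous E := by
    rw [hEdef]
    exact (hcx₁.pow 2).add ((hcx₂.sub continuous_const).pow 2)
  have hE0 : E 0 = 0 := by rw [hEdef]; simp [h1, h2]
  have hEnn : ∀ t, 0 ≤ E t := fun t => by rw [hEdef]; positivity
  obtain ⟨C₁, hC₁⟩ := isCompact_Icc.exists_bound_of_continuousOn
    (hcx₁.continuousOn : ContinuousOn x₁ (Icc a b))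
  obtain ⟨C₂, hC₂⟩ := isCompact_Icc.exists_bound_of_continuousOn
    ((hcx₂.sub continuous_const).continuousOn : ContinuousOn (fun t => x₂ t - 10) (Icc a b))
  obtain ⟨C, hC⟩ : ∃ C : ℝ, C = max C₁ C₂ := ⟨_, rfl⟩
  have hbound : ∀ t ∈ Icc a b, |x₁ t| ≤ C ∧ |x₂ t - 10| ≤ C := by
    intro t ht
    rw [hC]
    exact ⟨le_trans (by simpa using hC₁ t ht) (le_max_left _ _),
      le_trans (by simpa using hC₂ t ht) (le_max_right _ _)⟩
  obtain ⟨K, hK⟩ : ∃ K : ℝ, K = 2 * C + 2 * |p₂| + 2 * |p₂ + p₃| + 30 := ⟨_, rfl⟩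
  have hDE : ∀ t ∈ Icc a b, |D t| ≤ K * E t := by
    intro t ht
    obtain ⟨hv, hw⟩ := hbound t ht
    obtain ⟨v, hvdef⟩ : ∃ v : ℝ, v = x₁ t := ⟨_, rfl⟩
    obtain ⟨w, hwdef⟩ : ∃ w : ℝ, w = x₂ t - 10 := ⟨_, rfl⟩
    rw [← hvdef] at hv
    rw [← hwdef] at hw
    have hvw : x₂ t = w + 10 := by rw [hwdef]; ring
    have hv1 : -C ≤ v := (abs_le.mp hv).1
    have hv2 : v ≤ C := (abs_le.mp hv).2
    have hw1 : -C ≤ w := (abs_le.mp hw).1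
    have hw2 : w ≤ C := (abs_le.mp hw).2
    have hp2a : -|p₂| ≤ p₂ := neg_abs_le p₂
    have hp2b : p₂ ≤ |p₂| := le_abs_self p₂
    have hp3a : -|p₂ + p₃| ≤ p₂ + p₃ := neg_abs_le _
    have hp3b : p₂ + p₃ ≤ |p₂ + p₃| := le_abs_self _
    have hDexp : D t = -(2*v^2*w) - 20*v^2 - 2*p₂*(v*w) - (2*v*w^2) - 20*(v*w)
        - 2*(p₂+p₃)*w^2 := by
      rw [hDdef, hvdef, hwdef]
      ring
    have hEt : E t = v ^ 2 + w ^ 2 := by rw [hEdef, hvdef, hwdef]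
    have e1 : -(2*v^2*w) ≤ 2*C*v^2 := aux_cube C v w hw1
    have e1' : 2*v^2*w ≤ 2*C*v^2 := by
      have h := aux_cube C v (-w) (by linarith)
      linarith
    have e2 : -(2*v*w^2) ≤ 2*C*w^2 := by
      have h := aux_cube C w v hv1
      linarith
    have e2' : 2*v*w^2 ≤ 2*C*w^2 := by
      have h := aux_cube C w (-v) (by linarith)
      linarith
    have e3 : -(2*p₂*(v*w)) ≤ |p₂| * v^2 + |p₂| * w^2 := aux_cross' p₂ v w
    have e3' : 2*p₂*(v*w) ≤ |p₂| * v^2 + |p₂| * w^2 := aux_cross p₂ v w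
    have e4 : -(20*(v*w)) ≤ 10*v^2 + 10*w^2 := by nlinarith [sq_nonneg (v + w)]
    have e4' : 20*(v*w) ≤ 10*v^2 + 10*w^2 := by nlinarith [sq_nonneg (v - w)]
    have e5 : -(2*(p₂+p₃)*w^2) ≤ 2*|p₂+p₃| * w^2 := by
      have h := aux_sq (-(p₂+p₃)) w
      rw [abs_neg] at h
      linarith
    have e5' : 2*(p₂+p₃)*w^2 ≤ 2*|p₂+p₃| * w^2 := aux_sq (p₂+p₃) w
    have c1 : 0 ≤ (|p₂| + 2*|p₂+p₃| + 20) * v^2 :=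
      mul_nonneg (by positivity) (sq_nonneg v)
    have c2 : 0 ≤ (|p₂| + 20) * w^2 := mul_nonneg (by positivity) (sq_nonneg w)
    have c3 : 0 ≤ 20 * v^2 := by positivity
    have c4 : 0 ≤ (|p₂| + 2*|p₂+p₃|) * v^2 := mul_nonneg (by positivity) (sq_nonneg v)
    have c5 : 0 ≤ |p₂| * w^2 := mul_nonneg (abs_nonneg _) (sq_nonneg w)
    rw [abs_le, hDexp, hEt, hK]
    constructor <;> linarith
  have hET : E T = 0 := by
    rcases le_or_gt 0 T with hT | hT
    · obtain ⟨g, hg⟩ : ∃ g : ℝ → ℝ, g = fun t => E t * Real.exp (-K * t) := ⟨_, rfl⟩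
      have hg' : ∀ t, HasDerivAt g
          (D t * Real.exp (-K * t) + E t * (-K * Real.exp (-K * t))) t := by
        intro t
        rw [hg]
        have he : HasDerivAt (fun t => Real.exp (-K * t)) (-K * Real.exp (-K * t)) t := by
          have h := (Real.hasDerivAt_exp (-K * t)).comp t ((hasDerivAt_id t).const_mul (-K))
          simpa [Function.comp_def, mul_comm] using h
        exact (hE' t).mul he
      have hanti : AntitoneOn g (Icc 0 b) := by
        apply antitoneOn_of_deriv_nonpos (convex_Icc 0 b)
        · rw [hg]
          exact (hEcont.mul (Real.continuous_exp.comp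
            (continuous_const.mul continuous_id))).continuousOn
        · exact fun x _ => (hg' x).differentiableAt.differentiableWithinAt
        · intro x hx
          rw [interior_Icc] at hx
          rw [(hg' x).deriv]
          have hxm : x ∈ Icc a b := ⟨le_trans ha0.le hx.1.le, hx.2.le⟩
          have h := (abs_le.mp (hDE x hxm)).2
          have hexp : (0:ℝ) < Real.exp (-K * x) := Real.exp_pos _
          nlinarith [mul_nonneg (show (0:ℝ) ≤ K * E x - D x by linarith)
            (Real.exp_pos (-K * x)).le]
      have hTm : T ∈ Icc (0:ℝ) b := ⟨hT, by rw [hb]; linarith [le_abs_self T]⟩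
      have hle := hanti ⟨le_rfl, hb0.le⟩ hTm hT
      have hg0 : g 0 = 0 := by rw [hg]; simp [hE0]
      rw [hg0, hg] at hle
      simp only at hle
      have hexp : (0:ℝ) < Real.exp (-K * T) := Real.exp_pos _
      have h5 : E T ≤ 0 := by
        by_contra h
        push_neg at h
        nlinarith [mul_pos h hexp]
      linarith [hEnn T]
    · obtain ⟨g, hg⟩ : ∃ g : ℝ → ℝ, g = fun t => E t * Real.exp (K * t) := ⟨_, rfl⟩
      have hg' : ∀ t, HasDerivAt g
          (D t * Real.exp (K * t) + E t * (K * Real.exp (K * t))) t := by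
        intro t
        rw [hg]
        have he : HasDerivAt (fun t => Real.exp (K * t)) (K * Real.exp (K * t)) t := by
          have h := (Real.hasDerivAt_exp (K * t)).comp t ((hasDerivAt_id t).const_mul K)
          simpa [Function.comp_def, mul_comm] using h
        exact (hE' t).mul he
      have hmono : MonotoneOn g (Icc a 0) := by
        apply monotoneOn_of_deriv_nonneg (convex_Icc a 0)
        · rw [hg]
          exact (hEcont.mul (Real.continuous_exp.comp
            (continuous_const.mul continuous_id))).continuousOn
        · exact fun x _ => (hg' x).differentiableAt.differentiableWithinAt
        · intro x hx
          rw [interior_Icc] at hx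
          rw [(hg' x).deriv]
          have hxm : x ∈ Icc a b := ⟨hx.1.le, le_trans hx.2.le hb0.le⟩
          have h := (abs_le.mp (hDE x hxm)).1
          have hexp : (0:ℝ) < Real.exp (K * x) := Real.exp_pos _
          nlinarith [mul_nonneg (show (0:ℝ) ≤ D x + K * E x by linarith)
            (Real.exp_pos (K * x)).le]
      have hTm : T ∈ Icc a (0:ℝ) := ⟨by rw [ha]; linarith [neg_abs_le T], hT.le⟩
      have hle := hmono hTm ⟨ha0.le, le_rfl⟩ hT.le
      have hg0 : g 0 = 0 := by rw [hg]; simp [hE0]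
      rw [hg0, hg] at hle
      simp only at hle
      have hexp : (0:ℝ) < Real.exp (K * T) := Real.exp_pos _
      have h5 : E T ≤ 0 := by
        by_contra h
        push_neg at h
        nlinarith [mul_pos h hexp]
      linarith [hEnn T]
  have hv0 : (x₁ T) ^ 2 = 0 := by
    have := sq_nonneg (x₂ T - 10)
    have := sq_nonneg (x₁ T)
    rw [hEdef] at hET
    simp only at hET
    linarith
  have hw0 : (x₂ T - 10) ^ 2 = 0 := by
    have := sq_nonneg (x₂ T - 10)
    have := sq_nonneg (x₁ T)
    rw [hEdef] at hET
    simp only at hET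
    linarith
  constructor
  · exact pow_eq_zero_iff two_ne_zero |>.mp hv0
  · have := pow_eq_zero_iff two_ne_zero |>.mp hw0
    linarith

/-- The parameters p₂ and p₃ of model M_{3.3.A} are unidentifiable from the
initial condition x₁(0) = 0, x₂(0) = 10: any two parameterisations yield
identical outputs. -/
theorem stmt_14 (p₁ p₂ p₃ p₂' p₃' : ℝ) (x₁ x₂ x₃ y₁ y₂ y₃ : ℝ → ℝ)
    (hx₁ : ∀ t : ℝ, HasDerivAt x₁ (-(x₁ t) * x₂ t + p₂ * (10 - x₂ t)) t)
    (hx₂ : ∀ t : ℝ, HasDerivAt x₂ (-(x₁ t) * x₂ t + (p₂ + p₃) * (10 - x₂ t)) t)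
    (hx₃ : ∀ t : ℝ, HasDerivAt x₃ (-p₁ * x₃ t + p₃ * (10 - x₂ t)) t)
    (hy₁ : ∀ t : ℝ, HasDerivAt y₁ (-(y₁ t) * y₂ t + p₂' * (10 - y₂ t)) t)
    (hy₂ : ∀ t : ℝ, HasDerivAt y₂ (-(y₁ t) * y₂ t + (p₂' + p₃') * (10 - y₂ t)) t)
    (hy₃ : ∀ t : ℝ, HasDerivAt y₃ (-p₁ * y₃ t + p₃' * (10 - y₂ t)) t)
    (hx₁0 : x₁ 0 = 0) (hy₁0 : y₁ 0 = 0)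
    (hx₂0 : x₂ 0 = 10) (hy₂0 : y₂ 0 = 10)
    (hx₃0 : x₃ 0 = y₃ 0) :
    ∀ t : ℝ, x₁ t = y₁ t ∧ x₃ t = y₃ t := by
  have hx := key_lemma p₂ p₃ x₁ x₂ hx₁ hx₂ hx₁0 hx₂0
  have hy := key_lemma p₂' p₃' y₁ y₂ hy₁ hy₂ hy₁0 hy₂0
  have hx₃' : ∀ t : ℝ, HasDerivAt x₃ (-p₁ * x₃ t) t := by
    intro t; have h := hx₃ t; rw [(hx t).2] at h; simpa using h
  have hy₃' : ∀ t : ℝ, HasDerivAt y₃ (-p₁ * y₃ t) t := by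
    intro t; have h := hy₃ t; rw [(hy t).2] at h; simpa using h
  have hlip : ∀ u : ℝ, LipschitzWith ‖p₁‖₊ (fun z : ℝ => -p₁ * z) := by
    intro u
    apply LipschitzWith.of_dist_le_mul
    intro x y
    simp only [Real.dist_eq, ← mul_sub, abs_mul, abs_neg, coe_nnnorm, Real.norm_eq_abs]
    exact le_rfl
  intro t
  refine ⟨by rw [(hx t).1, (hy t).1], ?_⟩
  obtain ⟨a, ha⟩ : ∃ a : ℝ, a = -(|t| + 1) := ⟨_, rfl⟩
  obtain ⟨b, hb⟩ : ∃ b : ℝ, b = |t| + 1 := ⟨_, rfl⟩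
  have habs : (0:ℝ) ≤ |t| := abs_nonneg t
  have h0ab : (0:ℝ) ∈ Ioo a b := by
    constructor
    · rw [ha]; linarith
    · rw [hb]; linarith
  have heq : EqOn x₃ y₃ (Icc a b) := by
    apply ODE_solution_unique_of_mem_Icc (v := fun _ z => -p₁ * z) (s := fun _ => univ)
      (fun u _ => (hlip u).lipschitzOnWith) h0ab
    · exact (continuous_iff_continuousAt.mpr
        fun u => (hx₃' u).differentiableAt.continuousAt).continuousOn
    · exact fun u _ => hx₃' u
    · exact fun u _ => trivial
    · exact (continuous_iff_continuousAt.mpr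
        fun u => (hy₃' u).differentiableAt.continuousAt).continuousOn
    · exact fun u _ => hy₃' u
    · exact fun u _ => trivial
    · exact hx₃0
  exact heq ⟨by rw [ha]; linarith [neg_abs_le t],
    by rw [hb]; linarith [le_abs_self t]⟩
end

section
/- Let n_x, n_θ, n_y be natural numbers with n_y ≥ 1, and for each integer n_e ≥ 1 define F(n_e) = ⌈(n_e·n_x + n_θ − n_e·n_y)/(n_e·n_y)⌉, the minimum number of Lie derivatives for which the multi-experiment observability–identifiability matrix with n_e experiments has at least as many rows as columns. Then F is antitone in the number of experiments: for all 1 ≤ n_e ≤ n_e', F(n_e') ≤ F(n_e). In particular, F(n_e) ≤ F(1) = ⌈(n_x + n_θ − n_y)/n_y⌉ for every n_e ≥ 1, so using multiple experiments may decrease, and never increases, the required number of Lie derivatives. -/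
/-! Writing the numerator as `n_e (n_x - n_y) + n_θ`, the quotient is
`(n_x - n_y)/n_y + (n_θ/n_y)/n_e`, a constant plus a nonnegative multiple of `1/n_e`;
it decreases in `n_e`, and so does its ceiling. -/

theorem mul_add_div_mul_eq {K : Type*} [Field K] (a b c : K) {x : K} (hx : x ≠ 0) :
    (x * a + c) / (x * b) = a / b + c / b / x := by
  rw [add_div, mul_div_mul_left _ _ hx, div_div, mul_comm b]

theorem antitoneOn_mul_add_div_mul {K : Type*} [Field K] [LinearOrder K] [IsStrictOrderedRing K]
    (a : K) {b c : K} (hb : 0 ≤ b) (hc : 0 ≤ c) :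
    AntitoneOn (fun x => (x * a + c) / (x * b)) (Set.Ioi 0) := by
  intro x hx y hy hxy
  simp only [mul_add_div_mul_eq a b c hx.ne', mul_add_div_mul_eq a b c (Set.mem_Ioi.mp hy).ne']
  gcongr

theorem stmt_17_general (nx nθ ny : ℕ) (F : ℕ → ℤ)
    (hF : ∀ ne : ℕ, F ne =
      ⌈(((ne : ℚ) * nx + nθ - (ne : ℚ) * ny) / ((ne : ℚ) * ny))⌉) :
    (∀ ne ne' : ℕ, 1 ≤ ne → ne ≤ ne' → F ne' ≤ F ne) ∧
    F 1 = ⌈(((nx : ℚ) + nθ - ny) / (ny : ℚ))⌉ ∧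
    (∀ ne : ℕ, 1 ≤ ne → F ne ≤ F 1) := by
  have hF_split : ∀ ne : ℕ, F ne = ⌈((ne : ℚ) * (nx - ny) + nθ) / ((ne : ℚ) * ny)⌉ := by
    intro ne
    rw [hF]
    congr 2
    ring
  have anti : ∀ ne ne' : ℕ, 1 ≤ ne → ne ≤ ne' → F ne' ≤ F ne := by
    intro ne ne' hne hle
    rw [hF_split, hF_split]
    refine Int.ceil_le_ceil (antitoneOn_mul_add_div_mul _ (Nat.cast_nonneg ny)
      (Nat.cast_nonneg nθ) ?_ ?_ (by exact_mod_cast hle)) <;>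
      simp only [Set.mem_Ioi, Nat.cast_pos] <;> omega
  exact ⟨anti, by simp [hF], fun ne hne => anti 1 ne le_rfl hne⟩

/-- The minimum number of Lie derivatives for which the multi-experiment
observability–identifiability matrix with n_e experiments has at least as
many rows as columns, F(n_e) = ⌈(n_e·n_x + n_θ − n_e·n_y)/(n_e·n_y)⌉, is
antitone in n_e ≥ 1; in particular F(n_e) ≤ F(1) = ⌈(n_x + n_θ − n_y)/n_y⌉. -/
theorem stmt_17 (nx nθ ny : ℕ) (hny : 1 ≤ ny) (F : ℕ → ℤ)
    (hF : ∀ ne : ℕ, F ne =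
      ⌈(((ne : ℚ) * nx + nθ - (ne : ℚ) * ny) / ((ne : ℚ) * ny))⌉) :
    (∀ ne ne' : ℕ, 1 ≤ ne → ne ≤ ne' → F ne' ≤ F ne) ∧
    F 1 = ⌈(((nx : ℚ) + nθ - ny) / (ny : ℚ))⌉ ∧
    (∀ ne : ℕ, 1 ≤ ne → F ne ≤ F 1) :=
  stmt_17_general nx nθ ny F hF
end
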